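/- Let ψ : ℝ^n \ {x₀} → ℝ (n ≥ 2) be given by ψ(x) = C₀ + ⟨x − x₀, ν⟩ / |x − x₀|² for constants C₀ ∈ ℝ, ν, x₀ ∈ ℝ^n. Then ψ satisfies the PDE ∂_kψ ∂_kψ ∂_{ij}ψ + ∂_kψ ∂_lψ ∂_{kl}ψ δ_{ij} = ∂_iψ ∂_{jk}ψ ∂_kψ + ∂_jψ ∂_{ik}ψ ∂_kψ on its domain. -/

import Mathlib

open Real

/-- First partial derivative `∂ᵢ f` on `ℝⁿ`. -/
noncomputable def pd {n : ℕ} (i : Fin n) (f : (Fin n → ℝ) → ℝ) (x : Fin n → ℝ) : ℝ :=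
  fderiv ℝ f x (Pi.single i 1)

/-- Second partial derivative `∂ᵢ∂ⱼ f`. -/
noncomputable def pd2 {n : ℕ} (i j : Fin n) (f : (Fin n → ℝ) → ℝ) (x : Fin n → ℝ) : ℝ :=
  pd i (pd j f) x

open Filter Topology Finset

/-!
Write `y = x - x₀`, `S = |y|²`, `N = ⟨y, ν⟩` and `p = ∇ψ(x) = ν / S - (2N / S²) y`.
Differentiating once more, the Hessian takes the shape `H = α (p ⊗ y + y ⊗ p) + β I` with
`α = -2 / S`, `β = -2N / S²`. Since `N / S` is homogeneous of degree `-1`, Euler's relation gives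
`⟨y, p⟩ = -N / S`, that is `α ⟨y, p⟩ + β = 0`. For every matrix of this shape
`|p|² H + ⟨p, H p⟩ I - (p ⊗ H p + H p ⊗ p) = 2 (α ⟨y, p⟩ + β) (|p|² I - p ⊗ p)`, which therefore vanishes.
-/

section RankTwoUpdate
variable {R ι : Type*} [CommRing R] [Fintype ι] [DecidableEq ι]

theorem sum_mul_of_eq_rankTwo_add_smul_one {p y : ι → R} {α β : R} {H : ι → ι → R}
    (hH : ∀ i j, H i j = α * (p i * y j + y i * p j) + β * if i = j then 1 else 0) (m : ι) :
    ∑ k, H m k * p k = (α * ∑ k, y k * p k + β) * p m + α * (∑ k, p k * p k) * y m := by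
  have hterm : ∀ k, H m k * p k
      = α * (y k * p k) * p m + α * (p k * p k) * y m + if m = k then β * p m else 0 := by
    intro k
    split_ifs with h <;> simp [hH, h] <;> ring
  simp only [hterm, sum_add_distrib, ← sum_mul, ← mul_sum, sum_ite_eq, mem_univ, if_true]
  ring

theorem cubic_identity_of_eq_rankTwo_add_smul_one {p y : ι → R} {α β : R} {H : ι → ι → R}
    (hH : ∀ i j, H i j = α * (p i * y j + y i * p j) + β * if i = j then 1 else 0)
    (hαβ : α * ∑ k, y k * p k + β = 0) (i j : ι) :
    (∑ k, p k * p k) * H i j + (∑ k, ∑ l, p k * p l * H k l) * (if i = j then 1 else 0)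
      = p i * ∑ k, H j k * p k + p j * ∑ k, H i k * p k := by
  have hHp : ∀ m, ∑ k, H m k * p k = α * (∑ k, p k * p k) * y m := by
    intro m
    rw [sum_mul_of_eq_rankTwo_add_smul_one hH, hαβ, zero_mul, zero_add]
  have hpHp : ∑ k, ∑ l, p k * p l * H k l = α * (∑ k, p k * p k) * ∑ k, y k * p k := by
    calc ∑ k, ∑ l, p k * p l * H k l = ∑ k, p k * ∑ l, H k l * p l := by
          simp only [mul_sum]; exact sum_congr rfl fun k _ => sum_congr rfl fun l _ => by ring
      _ = ∑ k, α * (∑ k, p k * p k) * (y k * p k) := by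
          simp only [hHp]; exact sum_congr rfl fun k _ => by ring
      _ = α * (∑ k, p k * p k) * ∑ k, y k * p k := (mul_sum ..).symm
  rw [hHp, hHp, hpHp, hH]
  linear_combination (∑ k, p k * p k) * (if i = j then 1 else 0) * hαβ

end RankTwoUpdate

section PartialDerivative
variable {n : ℕ} {f g : (Fin n → ℝ) → ℝ} {x : Fin n → ℝ} (i : Fin n)

theorem pd_congr_of_eventuallyEq (h : f =ᶠ[𝓝 x] g) : pd i f x = pd i g x := by
  rw [pd, pd, h.fderiv_eq]

theorem pd_const_add (c : ℝ) : pd i (fun z => c + f z) x = pd i f x := by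
  rw [pd, pd, fderiv_const_add]

theorem pd_sub_const (c : ℝ) : pd i (fun z => f z - c) x = pd i f x := by
  rw [pd, pd, fderiv_sub_const]

theorem pd_apply (k : Fin n) : pd i (fun z => z k) x = if k = i then 1 else 0 := by
  simp [pd, (hasFDerivAt_apply k x).fderiv, Pi.single_apply]

theorem pd_sub (hf : DifferentiableAt ℝ f x) (hg : DifferentiableAt ℝ g x) :
    pd i (fun z => f z - g z) x = pd i f x - pd i g x := by
  simp [pd, fderiv_fun_sub hf hg]

theorem pd_mul (hf : DifferentiableAt ℝ f x) (hg : DifferentiableAt ℝ g x) :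
    pd i (fun z => f z * g z) x = pd i f x * g x + f x * pd i g x := by
  simp [pd, fderiv_fun_mul hf hg]; ring

theorem pd_pow (hf : DifferentiableAt ℝ f x) (m : ℕ) :
    pd i (fun z => f z ^ m) x = m * f x ^ (m - 1) * pd i f x := by
  simp [pd, fderiv_fun_pow m hf]

theorem pd_sum {ι : Type*} (s : Finset ι) {F : ι → (Fin n → ℝ) → ℝ}
    (hF : ∀ k ∈ s, DifferentiableAt ℝ (F k) x) :
    pd i (fun z => ∑ k ∈ s, F k z) x = ∑ k ∈ s, pd i (F k) x := by
  simp [pd, fderiv_fun_sum hF]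

theorem pd_div (hf : DifferentiableAt ℝ f x) (hg : DifferentiableAt ℝ g x) (hx : g x ≠ 0) :
    pd i (fun z => f z / g z) x = (pd i f x * g x - f x * pd i g x) / g x ^ 2 := by
  have hinv : HasFDerivAt (fun z => (g z)⁻¹) ((-(g x ^ 2)⁻¹) • fderiv ℝ g x) x :=
    (hasDerivAt_inv hx).comp_hasFDerivAt x hg.hasFDerivAt
  simp only [div_eq_mul_inv, pd, fderiv_fun_mul hf hinv.differentiableAt, hinv.fderiv]
  simp
  field_simp
  ring

theorem pd_const_mul (hf : DifferentiableAt ℝ f x) (c : ℝ) :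
    pd i (fun z => c * f z) x = c * pd i f x := by
  simp [pd, fderiv_const_mul hf]

theorem pd_mul_const (hf : DifferentiableAt ℝ f x) (c : ℝ) :
    pd i (fun z => f z * c) x = pd i f x * c := by
  simp [pd, fderiv_mul_const hf]; ring

end PartialDerivative

section Inversion
variable {n : ℕ} (x₀ ν : Fin n → ℝ)

noncomputable def sqDist (z : Fin n → ℝ) : ℝ := ∑ k, (z k - x₀ k) ^ 2

noncomputable def dispDot (z : Fin n → ℝ) : ℝ := ∑ k, (z k - x₀ k) * ν k

@[fun_prop]
theorem differentiable_sqDist : Differentiable ℝ (sqDist x₀) := by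
  unfold sqDist; fun_prop

@[fun_prop]
theorem differentiable_dispDot : Differentiable ℝ (dispDot x₀ ν) := by
  unfold dispDot; fun_prop

variable {x₀ ν} {x : Fin n → ℝ}

theorem sqDist_pos (hx : x ≠ x₀) : 0 < sqDist x₀ x := by
  obtain ⟨k, hk⟩ := Function.ne_iff.mp hx
  exact sum_pos' (fun _ _ => sq_nonneg _) ⟨k, mem_univ k, by have := sub_ne_zero.mpr hk; positivity⟩

theorem pd_sqDist (i : Fin n) : pd i (sqDist x₀) x = 2 * (x i - x₀ i) := by
  calc pd i (sqDist x₀) x = ∑ k, 2 * (x k - x₀ k) * if k = i then 1 else 0 := by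
        unfold sqDist
        rw [pd_sum _ _ fun k _ => by fun_prop]
        refine sum_congr rfl fun k _ => ?_
        rw [pd_pow _ (by fun_prop), pd_sub_const, pd_apply]
        norm_num
    _ = 2 * (x i - x₀ i) := by simp

theorem pd_dispDot (i : Fin n) : pd i (dispDot x₀ ν) x = ν i := by
  calc pd i (dispDot x₀ ν) x = ∑ k, (if k = i then 1 else 0) * ν k := by
        unfold dispDot
        rw [pd_sum _ _ fun k _ => by fun_prop]
        refine sum_congr rfl fun k _ => ?_
        rw [pd_mul_const _ (by fun_prop), pd_sub_const, pd_apply]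
    _ = ν i := by simp

variable {C₀ : ℝ} {ψ : (Fin n → ℝ) → ℝ}

theorem pd_of_eq_inversion (hψ : ∀ z, z ≠ x₀ → ψ z = C₀ + dispDot x₀ ν z / sqDist x₀ z)
    (hx : x ≠ x₀) (i : Fin n) :
    pd i ψ x = (ν i * sqDist x₀ x - dispDot x₀ ν x * (2 * (x i - x₀ i))) / sqDist x₀ x ^ 2 := by
  rw [pd_congr_of_eventuallyEq i ((eventually_ne_nhds hx).mono hψ), pd_const_add,
    pd_div _ (by fun_prop) (by fun_prop) (sqDist_pos hx).ne', pd_dispDot, pd_sqDist]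

theorem pd2_of_eq_inversion (hψ : ∀ z, z ≠ x₀ → ψ z = C₀ + dispDot x₀ ν z / sqDist x₀ z)
    (hx : x ≠ x₀) (i j : Fin n) :
    pd2 i j ψ x = -(2 / sqDist x₀ x) * (pd i ψ x * (x j - x₀ j) + (x i - x₀ i) * pd j ψ x)
      + -(2 * dispDot x₀ ν x / sqDist x₀ x ^ 2) * if i = j then 1 else 0 := by
  have hgrad : pd j ψ =ᶠ[𝓝 x] fun z =>
      (ν j * sqDist x₀ z - dispDot x₀ ν z * (2 * (z j - x₀ j))) / sqDist x₀ z ^ 2 :=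
    (eventually_ne_nhds hx).mono fun z hz => pd_of_eq_inversion hψ hz j
  have hS := (sqDist_pos hx).ne'
  rw [pd2, pd_congr_of_eventuallyEq i hgrad, pd_div _ (by fun_prop) (by fun_prop) (by positivity),
    pd_sub _ (by fun_prop) (by fun_prop), pd_const_mul _ (by fun_prop),
    pd_mul _ (by fun_prop) (by fun_prop), pd_const_mul _ (by fun_prop), pd_sub_const, pd_apply,
    pd_pow _ (by fun_prop), pd_sqDist, pd_dispDot, pd_of_eq_inversion hψ hx i,
    pd_of_eq_inversion hψ hx j]
  rcases eq_or_ne j i with rfl | h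
  · simp only [if_true]; field_simp; ring
  · simp only [h, h.symm, if_false]; field_simp; ring

theorem sum_sub_mul_pd_of_eq_inversion
    (hψ : ∀ z, z ≠ x₀ → ψ z = C₀ + dispDot x₀ ν z / sqDist x₀ z) (hx : x ≠ x₀) :
    ∑ k, (x k - x₀ k) * pd k ψ x = -(dispDot x₀ ν x / sqDist x₀ x) := by
  have hS := (sqDist_pos hx).ne'
  calc ∑ k, (x k - x₀ k) * pd k ψ x
      = (∑ k, (x k - x₀ k) * ν k * sqDist x₀ x
          - ∑ k, 2 * dispDot x₀ ν x * (x k - x₀ k) ^ 2) / sqDist x₀ x ^ 2 := by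
        rw [← sum_sub_distrib, sum_div]
        exact sum_congr rfl fun k _ => by rw [pd_of_eq_inversion hψ hx]; ring
    _ = -(dispDot x₀ ν x / sqDist x₀ x) := by
        rw [← sum_mul, ← mul_sum]
        change (dispDot x₀ ν x * sqDist x₀ x - 2 * dispDot x₀ ν x * sqDist x₀ x) / _ = _
        field_simp; ring

end Inversion

theorem inversion_solves_cubic_pde_general {n : ℕ} (C₀ : ℝ) (ν x₀ : Fin n → ℝ)
    (ψ : (Fin n → ℝ) → ℝ)
    (hψ : ∀ x, x ≠ x₀ →
      ψ x = C₀ + (∑ k, (x k - x₀ k) * ν k) / (∑ k, (x k - x₀ k) ^ 2)) :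
    ∀ x : Fin n → ℝ, x ≠ x₀ → ∀ i j : Fin n,
      (∑ k, pd k ψ x * pd k ψ x) * pd2 i j ψ x
        + (∑ k, ∑ l, pd k ψ x * pd l ψ x * pd2 k l ψ x) * (if i = j then (1:ℝ) else 0)
      = pd i ψ x * (∑ k, pd2 j k ψ x * pd k ψ x)
        + pd j ψ x * (∑ k, pd2 i k ψ x * pd k ψ x) := by
  intro x hx i j
  have hψ' : ∀ z, z ≠ x₀ → ψ z = C₀ + dispDot x₀ ν z / sqDist x₀ z := hψ
  refine cubic_identity_of_eq_rankTwo_add_smul_one (y := fun k => x k - x₀ k)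
    (pd2_of_eq_inversion hψ' hx) ?_ i j
  rw [sum_sub_mul_pd_of_eq_inversion hψ' hx]
  field_simp
  ring

/-- The function `ψ(x) = C₀ + ⟨x − x₀, ν⟩ / ‖x − x₀‖²` satisfies, away from `x₀`, the
homogeneous cubic PDE `∂ₖψ∂ₖψ ∂ᵢⱼψ + ∂ₖψ∂ₗψ∂ₖₗψ δᵢⱼ = ∂ᵢψ ∂ⱼₖψ∂ₖψ + ∂ⱼψ ∂ᵢₖψ∂ₖψ`. -/
theorem inversion_solves_cubic_pde {n : ℕ} (hn : 2 ≤ n) (C₀ : ℝ) (ν x₀ : Fin n → ℝ)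
    (ψ : (Fin n → ℝ) → ℝ)
    (hψ : ∀ x, x ≠ x₀ →
      ψ x = C₀ + (∑ k, (x k - x₀ k) * ν k) / (∑ k, (x k - x₀ k) ^ 2)) :
    ∀ x : Fin n → ℝ, x ≠ x₀ → ∀ i j : Fin n,
      (∑ k, pd k ψ x * pd k ψ x) * pd2 i j ψ x
        + (∑ k, ∑ l, pd k ψ x * pd l ψ x * pd2 k l ψ x) * (if i = j then (1:ℝ) else 0)
      = pd i ψ x * (∑ k, pd2 j k ψ x * pd k ψ x)
        + pd j ψ x * (∑ k, pd2 i k ψ x * pd k ψ x) :=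
  inversion_solves_cubic_pde_general C₀ ν x₀ ψ hψ
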